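/- arXiv:2203.05261 — 2 statements merged into one kernel-verified Lean document; each statement's English description precedes it below -/
import Mathlib

section
/- Let d ≥ 1, let f : ℝ^d → ℝ be an affine function, let v_1, …, v_{d+1} ∈ ℝ^d be affinely independent with d-simplex s = conv(v_1, …, v_{d+1}), and let f_s = (f(v_1), …, f(v_{d+1})) ∈ ℝ^{d+1}. Then ∫_s f(x)² dx = (vol(s) / ((d+1)(d+2))) · f_sᵀ P f_s, where P = 1_{d+1} + I_{d+1}. -/
/-!
Pull the integral back to the corner simplex `{y | 0 ≤ y, ∑ y ≤ 1}` along
`y ↦ ∑ i, λ i • v i`, where `λ = (y, 1 - ∑ y)` are the barycentric coordinates. The Jacobian is a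
constant `J`, and since `f` is affine, `f = ∑ i, λ i * f (v i)` there, so both `∫ f²` and `vol s`
are `J` times integrals of monomials in `λ` over the corner simplex. These are given by the
Dirichlet formula `∫ ∏ λ i ^ k i = ∏ (k i)! / (d + ∑ k)!`, proved by slicing off the first
coordinate and a Beta integral. Hence `vol s = J / d!` and
`∫ f² = J * ∑ i, ∑ j, (1 + δ i j) f (v i) f (v j) / (d + 2)!`.
-/

open MeasureTheory Set
open scoped Nat

def cornerSimplex (d : ℕ) (r : ℝ) : Set (Fin d → ℝ) := {y | (∀ i, 0 ≤ y i) ∧ ∑ i, y i ≤ r}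

def cornerBarycentric {d : ℕ} (r : ℝ) (y : Fin d → ℝ) : Fin (d + 1) → ℝ :=
  Fin.snoc y (r - ∑ i, y i)

namespace cornerSimplex

theorem isClosed (d : ℕ) (r : ℝ) : IsClosed (cornerSimplex d r) :=
  (isClosed_le (f := fun _ => (0 : Fin d → ℝ)) continuous_const continuous_id).inter
    (isClosed_le (continuous_finsetSum _ fun i _ => continuous_apply i) continuous_const)

theorem measurableSet (d : ℕ) (r : ℝ) : MeasurableSet (cornerSimplex d r) :=
  (isClosed d r).measurableSet

theorem subset_pi_Icc (d : ℕ) (r : ℝ) : cornerSimplex d r ⊆ univ.pi fun _ => Icc 0 r :=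
  fun _ ⟨hy₀, hy⟩ i _ =>
    ⟨hy₀ i, (Finset.single_le_sum (fun j _ => hy₀ j) (Finset.mem_univ i)).trans hy⟩

theorem isCompact (d : ℕ) (r : ℝ) : IsCompact (cornerSimplex d r) :=
  (isCompact_univ_pi fun _ => isCompact_Icc).of_isClosed_subset (isClosed d r) (subset_pi_Icc d r)

theorem zero_eq_univ {r : ℝ} (hr : 0 ≤ r) : cornerSimplex 0 r = univ := by
  ext y
  simpa [cornerSimplex] using hr

theorem cons_mem_iff {d : ℕ} {r t : ℝ} {z : Fin d → ℝ} :
    Fin.cons t z ∈ cornerSimplex (d + 1) r ↔ t ∈ Icc 0 r ∧ z ∈ cornerSimplex d (r - t) := by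
  simp only [cornerSimplex, mem_ofPred_eq, Fin.forall_fin_succ, Fin.cons_zero, Fin.cons_succ,
    Fin.sum_cons, mem_Icc]
  constructor
  · rintro ⟨⟨ht, hz⟩, hsum⟩
    have : 0 ≤ ∑ i, z i := Finset.sum_nonneg fun i _ => hz i
    exact ⟨⟨ht, by linarith⟩, hz, by linarith⟩
  · rintro ⟨⟨ht, -⟩, hz, hsum⟩
    exact ⟨⟨ht, hz⟩, by linarith⟩

theorem setIntegral_succ {d : ℕ} {r : ℝ} (hr : 0 ≤ r) {G : (Fin (d + 1) → ℝ) → ℝ}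
    (hG : Continuous G) :
    ∫ y in cornerSimplex (d + 1) r, G y =
      ∫ t in 0..r, ∫ z in cornerSimplex d (r - t), G (Fin.cons t z) := by
  have he := (volume_preserving_piFinSuccAbove (fun _ : Fin (d + 1) => ℝ) 0).symm
  have hcons : ⇑(MeasurableEquiv.piFinSuccAbove (fun _ : Fin (d + 1) => ℝ) 0).symm =
      fun p => Fin.cons p.1 p.2 := by
    ext p : 1
    simp [Fin.consEquiv]
  have hint : Integrable ((cornerSimplex (d + 1) r).indicator G) :=
    (integrable_indicator_iff (measurableSet _ _)).2
      (hG.continuousOn.integrableOn_compact (isCompact _ _))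
  have hslice (t : ℝ) : ∫ z, (cornerSimplex (d + 1) r).indicator G (Fin.cons t z) =
      (Icc 0 r).indicator (fun t => ∫ z in cornerSimplex d (r - t), G (Fin.cons t z)) t := by
    by_cases ht : t ∈ Icc 0 r
    · rw [indicator_of_mem ht, ← integral_indicator (measurableSet _ _)]
      congr 1 with z
      by_cases hz : z ∈ cornerSimplex d (r - t)
      · rw [indicator_of_mem (cons_mem_iff.2 ⟨ht, hz⟩), indicator_of_mem hz]
      · rw [indicator_of_notMem (fun h => hz (cons_mem_iff.1 h).2), indicator_of_notMem hz]
    · rw [indicator_of_notMem ht]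
      simp only [indicator_of_notMem (fun h => ht (cons_mem_iff.1 h).1), integral_zero]
  rw [intervalIntegral.integral_of_le hr, ← integral_Icc_eq_integral_Ioc,
    ← integral_indicator measurableSet_Icc, ← integral_indicator (measurableSet _ _),
    ← he.integral_comp', Measure.volume_eq_prod, integral_prod]
  · simp only [hcons]
    exact integral_congr_ae (.of_forall hslice)
  · exact (he.integrable_comp_emb (MeasurableEquiv.measurableEmbedding _)).2 hint

end cornerSimplex

theorem sum_cornerBarycentric {d : ℕ} (r : ℝ) (y : Fin d → ℝ) :
    ∑ i, cornerBarycentric r y i = r := by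
  simp [cornerBarycentric, Fin.sum_univ_castSucc]

@[fun_prop]
theorem continuous_cornerBarycentric {d : ℕ} (r : ℝ) :
    Continuous (cornerBarycentric (d := d) r) := by
  refine continuous_pi fun i => ?_
  induction i using Fin.lastCases with
  | last => simp only [cornerBarycentric, Fin.snoc_last]; fun_prop
  | cast j => simp only [cornerBarycentric, Fin.snoc_castSucc]; fun_prop

theorem cornerBarycentric_cons {d : ℕ} (r t : ℝ) (z : Fin d → ℝ) :
    cornerBarycentric r (Fin.cons t z : Fin (d + 1) → ℝ) =
      Fin.cons t (cornerBarycentric (r - t) z) := by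
  rw [cornerBarycentric, cornerBarycentric, Fin.cons_snoc_eq_snoc_cons, Fin.sum_cons,
    sub_add_eq_sub_sub]

theorem image_cornerBarycentric_cornerSimplex (d : ℕ) :
    cornerBarycentric 1 '' cornerSimplex d 1 = stdSimplex ℝ (Fin (d + 1)) := by
  ext w
  constructor
  · rintro ⟨y, ⟨hy₀, hy⟩, rfl⟩
    refine ⟨fun i => ?_, sum_cornerBarycentric 1 y⟩
    induction i using Fin.lastCases with
    | last => simpa [cornerBarycentric] using hy
    | cast j => simpa [cornerBarycentric] using hy₀ j
  · rintro ⟨hw₀, hw⟩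
    rw [Fin.sum_univ_castSucc] at hw
    have hinit : ∑ j : Fin d, w j.castSucc ≤ 1 := by linarith [hw₀ (Fin.last d)]
    refine ⟨Fin.init w, ⟨fun j => hw₀ _, hinit⟩, ?_⟩
    rw [cornerBarycentric, ← Fin.snoc_init_self w]
    simp [Fin.init, ← hw]

theorem integral_pow_mul_sub_pow (r : ℝ) (a b : ℕ) :
    ∫ t in 0..r, t ^ a * (r - t) ^ b = a ! * b ! / (a + b + 1)! * r ^ (a + b + 1) := by
  induction a generalizing b with
  | zero =>
    simp only [pow_zero, one_mul, intervalIntegral.integral_comp_sub_left (· ^ b),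
      sub_self, sub_zero, integral_pow, zero_add, Nat.factorial_zero, Nat.cast_one,
      Nat.factorial_succ, Nat.cast_mul, ne_eq, Nat.add_eq_zero_iff, one_ne_zero, and_false,
      not_false_eq_true, zero_pow]
    have : (b ! : ℝ) ≠ 0 := by positivity
    field_simp
    push_cast
    ring
  | succ a ih =>
    have hderiv (t : ℝ) :
        HasDerivAt (fun t => -(r - t) ^ (b + 1) / (b + 1)) ((r - t) ^ b) t := by
      have : HasDerivAt (fun t => (r - t) ^ (b + 1)) ((b + 1) * (r - t) ^ b * -1) t := by
        simpa using ((hasDerivAt_id t).const_sub r).fun_pow (b + 1)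
      refine (this.neg.div_const _).congr_deriv ?_
      field_simp
    have hparts := intervalIntegral.integral_mul_deriv_eq_deriv_mul (a := 0) (b := r)
      (fun t _ => hasDerivAt_pow (a + 1) t) (fun t _ => hderiv t)
      (Continuous.intervalIntegrable (by fun_prop) _ _)
      (Continuous.intervalIntegrable (by fun_prop) _ _)
    have hintegrand (x : ℝ) : ↑(a + 1) * x ^ (a + 1 - 1) * (-(r - x) ^ (b + 1) / (b + 1)) =
        -((a + 1) / (b + 1)) * (x ^ a * (r - x) ^ (b + 1)) := by
      push_cast
      field_simp
    rw [hparts]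
    simp only [hintegrand, intervalIntegral.integral_const_mul, ih, sub_self,
      zero_pow (Nat.succ_ne_zero _), zero_mul, mul_zero, zero_div, neg_zero, sub_zero, zero_sub,
      show a + (b + 1) + 1 = a + 1 + b + 1 by ring, Nat.factorial_succ, Nat.cast_mul]
    field_simp
    push_cast
    ring

theorem setIntegral_cornerSimplex_prod_pow (d : ℕ) (k : Fin (d + 1) → ℕ) {r : ℝ}
    (hr : 0 ≤ r) :
    ∫ y in cornerSimplex d r, ∏ i, cornerBarycentric r y i ^ k i =
      (∏ i, (k i)! : ℝ) / (d + ∑ i, k i)! * r ^ (d + ∑ i, k i) := by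
  induction d generalizing r with
  | zero =>
    rw [cornerSimplex.zero_eq_univ hr, Measure.restrict_univ]
    simp [cornerBarycentric, Fin.snoc, volume_pi, measureReal_def, Nat.factorial_ne_zero]
  | succ d ih =>
    rw [cornerSimplex.setIntegral_succ hr (by fun_prop)]
    set K := d + ∑ i, k (Fin.succ i)
    have hslice : ∀ t ∈ uIcc 0 r,
        ∫ z in cornerSimplex d (r - t), ∏ i, cornerBarycentric r (Fin.cons t z) i ^ k i =
          (∏ i, (k (Fin.succ i))! : ℝ) / K ! * (t ^ k 0 * (r - t) ^ K) := by
      intro t ht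
      rw [uIcc_of_le hr] at ht
      simp only [cornerBarycentric_cons]
      simp only [Fin.prod_univ_succ (n := d + 1), Fin.cons_zero, Fin.cons_succ]
      rw [integral_const_mul, ih _ (sub_nonneg.2 ht.2)]
      ring
    rw [intervalIntegral.integral_congr hslice, intervalIntegral.integral_const_mul,
      integral_pow_mul_sub_pow, Fin.prod_univ_succ (n := d + 1), Fin.sum_univ_succ (n := d + 1),
      show k 0 + K + 1 = d + 1 + (k 0 + ∑ i, k (Fin.succ i)) by omega]
    have : (K ! : ℝ) ≠ 0 := by positivity
    field_simp

theorem measureReal_cornerSimplex (d : ℕ) {r : ℝ} (hr : 0 ≤ r) :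
    volume.real (cornerSimplex d r) = r ^ d / d ! := by
  rw [div_eq_inv_mul]
  simpa using setIntegral_cornerSimplex_prod_pow d 0 hr

theorem setIntegral_cornerBarycentric_mul (d : ℕ) {r : ℝ} (hr : 0 ≤ r) (i j : Fin (d + 1)) :
    ∫ y in cornerSimplex d r, cornerBarycentric r y i * cornerBarycentric r y j =
      (if i = j then 2 else 1) / (d + 2)! * r ^ (d + 2) := by
  set k : Fin (d + 1) → ℕ := Pi.single i 1 + Pi.single j 1 with hk
  have hprod (x : Fin (d + 1) → ℝ) : ∏ l, x l ^ k l = x i * x j := by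
    simp only [hk, Pi.add_apply, pow_add, Finset.prod_mul_distrib, Pi.single_apply, pow_ite,
      pow_one, pow_zero, Finset.prod_ite_eq', Finset.mem_univ, if_true]
  have hfact : ∏ l, ((k l)! : ℝ) = if i = j then 2 else 1 := by
    split_ifs with hij
    · subst hij
      rw [Fintype.prod_eq_single i fun l hl => by simp [hk, hl]]
      simp [hk]
    · refine Finset.prod_eq_one fun l _ => ?_
      simp only [hk, Pi.add_apply, Pi.single_apply]
      split_ifs <;> simp_all
  have hsum : ∑ l, k l = 2 := by
    simp [hk, Finset.sum_add_distrib]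
  simpa only [hprod, hfact, hsum] using setIntegral_cornerSimplex_prod_pow d k hr

theorem setIntegral_cornerSimplex_sq_sum (d : ℕ) (c : Fin (d + 1) → ℝ) :
    ∫ y in cornerSimplex d 1, (∑ i, cornerBarycentric 1 y i * c i) ^ 2 =
      (∑ i, ∑ j, c i * (if i = j then 2 else 1) * c j) / (d + 2)! := by
  have hint (i j : Fin (d + 1)) : IntegrableOn
      (fun y => c i * c j * (cornerBarycentric 1 y i * cornerBarycentric 1 y j))
      (cornerSimplex d 1) :=
    (Continuous.continuousOn (by fun_prop)).integrableOn_compact (cornerSimplex.isCompact d 1)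
  have hsq (y : Fin d → ℝ) : (∑ i, cornerBarycentric 1 y i * c i) ^ 2 =
      ∑ i, ∑ j, c i * c j * (cornerBarycentric 1 y i * cornerBarycentric 1 y j) := by
    rw [sq, Finset.sum_mul_sum]
    exact Finset.sum_congr rfl fun i _ => Finset.sum_congr rfl fun j _ => by ring
  simp_rw [hsq]
  rw [integral_finsetSum _ fun i _ => integrable_finsetSum _ fun j _ => hint i j]
  simp_rw [integral_finsetSum _ fun j _ => hint _ j, integral_const_mul,
    setIntegral_cornerBarycentric_mul d zero_le_one, Finset.sum_div]
  refine Finset.sum_congr rfl fun i _ => Finset.sum_congr rfl fun j _ => ?_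
  ring

theorem convexHull_range_eq_image_stdSimplex {ι E : Type*} [Fintype ι]
    [AddCommGroup E] [Module ℝ E] (v : ι → E) :
    convexHull ℝ (range v) = Fintype.linearCombination ℝ v '' stdSimplex ℝ ι := by
  classical
  rw [← convexHull_rangle_single_eq_stdSimplex, LinearMap.image_convexHull, ← range_comp]
  congr 1 with i
  simp

section
variable {d : ℕ} {E : Type*} [AddCommGroup E] [Module ℝ E] (v : Fin (d + 1) → E)

def simplexEdgeMap : (Fin d → ℝ) →ₗ[ℝ] E :=
  Fintype.linearCombination ℝ fun j => v j.castSucc - v (Fin.last d)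

theorem linearCombination_cornerBarycentric (y : Fin d → ℝ) :
    Fintype.linearCombination ℝ v (cornerBarycentric 1 y) =
      v (Fin.last d) + simplexEdgeMap v y := by
  simp only [simplexEdgeMap, Fintype.linearCombination_apply, cornerBarycentric,
    Fin.sum_univ_castSucc, Fin.snoc_castSucc, Fin.snoc_last, smul_sub, Finset.sum_sub_distrib,
    sub_smul, one_smul, ← Finset.sum_smul]
  abel

theorem AffineIndependent.injective_linearCombination_cornerBarycentric
    (hv : AffineIndependent ℝ v) :
    Function.Injective fun y : Fin d → ℝ =>
      Fintype.linearCombination ℝ v (cornerBarycentric 1 y) := by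
  intro y y' h
  have hweights := hv.eq_of_sum_eq_sum (s := Finset.univ)
    (by rw [sum_cornerBarycentric, sum_cornerBarycentric]) h
  funext j
  simpa [cornerBarycentric] using hweights j.castSucc (Finset.mem_univ _)

end

theorem setIntegral_image_add_linearMap {E F : Type*} [NormedAddCommGroup E] [NormedSpace ℝ E]
    [FiniteDimensional ℝ E] [MeasurableSpace E] [BorelSpace E] (μ : Measure E)
    [μ.IsAddHaarMeasure] [NormedAddCommGroup F] [NormedSpace ℝ F] {s : Set E}
    (hs : MeasurableSet s) (c : E) (L : E →ₗ[ℝ] E) (hinj : InjOn (fun x => c + L x) s)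
    (g : E → F) :
    ∫ x in (fun x => c + L x) '' s, g x ∂μ = |L.det| • ∫ x in s, g (c + L x) ∂μ := by
  rw [integral_image_eq_integral_abs_det_fderiv_smul μ hs (f := fun x => c + L x)
    (fun x _ => (L.toContinuousLinearMap.hasFDerivAt.const_add c).hasFDerivWithinAt) hinj g,
    LinearMap.det_toContinuousLinearMap, integral_smul]

theorem AffineIndependent.setIntegral_convexHull_range {d : ℕ} {F : Type*}
    [NormedAddCommGroup F] [NormedSpace ℝ F] {v : Fin (d + 1) → Fin d → ℝ}
    (hv : AffineIndependent ℝ v) (g : (Fin d → ℝ) → F) :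
    ∫ x in convexHull ℝ (range v), g x = |(simplexEdgeMap v).det| •
      ∫ y in cornerSimplex d 1, g (Fintype.linearCombination ℝ v (cornerBarycentric 1 y)) := by
  have hparam := linearCombination_cornerBarycentric v
  have himage : convexHull ℝ (range v) =
      (fun y => v (Fin.last d) + simplexEdgeMap v y) '' cornerSimplex d 1 := by
    rw [convexHull_range_eq_image_stdSimplex, ← image_cornerBarycentric_cornerSimplex, image_image]
    simp_rw [hparam]
  have hinj : InjOn (fun y => v (Fin.last d) + simplexEdgeMap v y) (cornerSimplex d 1) := by
    simpa only [hparam] using hv.injective_linearCombination_cornerBarycentric.injOn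
  rw [himage, setIntegral_image_add_linearMap volume (cornerSimplex.measurableSet d 1) _ _ hinj]
  simp_rw [hparam]

theorem apply_linearCombination_of_affine {d : ℕ} {ι : Type*} [Fintype ι] {a : Fin d → ℝ}
    {b : ℝ} {f : (Fin d → ℝ) → ℝ} (hf : ∀ x, f x = (∑ i, a i * x i) + b) (v : ι → Fin d → ℝ)
    {w : ι → ℝ} (hw : ∑ i, w i = 1) :
    f (Fintype.linearCombination ℝ v w) = ∑ i, w i * f (v i) := by
  simp only [hf, Fintype.linearCombination_apply, Finset.sum_apply, Pi.smul_apply, smul_eq_mul,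
    mul_add, Finset.sum_add_distrib, ← Finset.sum_mul, hw, one_mul, Finset.mul_sum]
  rw [Finset.sum_comm]
  congr 1
  exact Finset.sum_congr rfl fun i _ => Finset.sum_congr rfl fun j _ => by ring

theorem integral_affine_sq_simplex_general (d : ℕ)
    (a : Fin d → ℝ) (b : ℝ) (f : (Fin d → ℝ) → ℝ)
    (hf : ∀ x, f x = (∑ i, a i * x i) + b)
    (v : Fin (d + 1) → (Fin d → ℝ)) (hv : AffineIndependent ℝ v) :
    ∫ x in convexHull ℝ (Set.range v), (f x) ^ 2 =
      (volume (convexHull ℝ (Set.range v))).toReal / ((d + 1) * (d + 2)) *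
        ∑ i, ∑ j, f (v i) * (if i = j then 2 else 1) * f (v j) := by
  set J := |(simplexEdgeMap v).det|
  have hvol : (volume (convexHull ℝ (Set.range v))).toReal = J / d ! := by
    rw [← measureReal_def]
    simpa [setIntegral_const, measureReal_cornerSimplex, div_eq_mul_inv] using
      hv.setIntegral_convexHull_range fun _ => (1 : ℝ)
  rw [hv.setIntegral_convexHull_range, smul_eq_mul, hvol]
  simp_rw [apply_linearCombination_of_affine hf v (sum_cornerBarycentric 1 _)]
  rw [setIntegral_cornerSimplex_sq_sum, Nat.factorial_succ, Nat.factorial_succ]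
  have : (d ! : ℝ) ≠ 0 := by positivity
  field_simp
  push_cast
  ring

/-- the squared-`L₂` integral of an affine function over a `d`-simplex is a
quadratic form in the vertex values with matrix `P = 1 + I`. -/
theorem integral_affine_sq_simplex (d : ℕ) (hd : 1 ≤ d)
    (a : Fin d → ℝ) (b : ℝ) (f : (Fin d → ℝ) → ℝ)
    (hf : ∀ x, f x = (∑ i, a i * x i) + b)
    (v : Fin (d + 1) → (Fin d → ℝ)) (hv : AffineIndependent ℝ v) :
    ∫ x in convexHull ℝ (Set.range v), (f x) ^ 2 =
      (volume (convexHull ℝ (Set.range v))).toReal / ((d + 1) * (d + 2)) *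
        ∑ i, ∑ j, f (v i) * (if i = j then 2 else 1) * f (v j) :=
  integral_affine_sq_simplex_general d a b f hf v hv
end

section
/- Let d ≥ 1 and let D : ℝ^d → ℝ be the Cartesian linear box spline. Then D(x) = 0 for every x outside the zonotope Z = { t_1 e_1 + ⋯ + t_d e_d + t_{d+1}·(1,…,1) : t ∈ [0,1]^{d+1} }, i.e., the support of D is contained in Z. -/
/-- The Cartesian linear box spline on `ℝ^d`:
`D(x) = Σ_{ε ∈ {0,1}^{d+1}} (−1)^{|ε|} max(0, min_{1 ≤ i ≤ d} (x_i − ε_i − ε_{d+1}))`. -/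
noncomputable def boxSplineD (d : ℕ) (x : Fin d → ℝ) : ℝ :=
  ∑ ε : Fin (d + 1) → Fin 2,
    (-1 : ℝ) ^ (∑ i, (ε i : ℕ)) *
      max 0 (⨅ i : Fin d, (x i - ((ε (Fin.castSucc i) : ℕ) : ℝ) - ((ε (Fin.last d) : ℕ) : ℝ)))

/-!
Summing out `ε_{d+1}` first writes `D(x)` as `Σ_{η ∈ {0,1}^d} (−1)^{|η|} min_i c(x_i − η_i)`, where
`c t = max 0 (min 1 t)` is the difference of the ramp `max 0 t` and its unit translate; `c` is
monotone and continuous, so it commutes with the minimum. An alternating sum over the cube vanishes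
as soon as its summand ignores one coordinate `η_a`. Outside `Z` some `x_a < 0`, `x_a > 2` or
`x_a > x_b + 1`; then `c(x_a − η_a)` is constantly `0`, constantly `1`, or never below
`c(x_b − η_b)`, and in each case it cannot change the minimum.
-/

open Finset Function

theorem sum_neg_one_pow_mul_eq_zero_of_update {ι R : Type*} [Fintype ι] [DecidableEq ι]
    [CommRing R] (f : (ι → Fin 2) → R) (a : ι) (hf : ∀ ε e, f (update ε a e) = f ε) :
    ∑ ε : ι → Fin 2, (-1 : R) ^ (∑ i, (ε i : ℕ)) * f ε = 0 := by
  have hflip : ∀ e : Fin 2, e.rev ≠ e := by decide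
  refine sum_ninvolution (fun ε => update ε a (ε a).rev) (fun ε => ?_)
    (fun ε _ h => hflip (ε a) (by simpa using congr_fun h a)) (fun _ => mem_univ _)
    (fun ε => by simp)
  have hrest : ∑ i ∈ univ.erase a, (update ε a (ε a).rev i : ℕ) = ∑ i ∈ univ.erase a, (ε i : ℕ) :=
    sum_congr rfl fun i hi => by rw [update_of_ne (ne_of_mem_erase hi)]
  rw [hf, ← add_sum_erase _ _ (mem_univ a), ← add_sum_erase _ _ (mem_univ a), hrest,
    update_self]
  obtain h | h : ε a = 0 ∨ ε a = 1 := by omega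
  all_goals simp [h, pow_add]

theorem ciInf_update_eq_of_le {ι β α : Type*} [Finite ι] [DecidableEq ι]
    [ConditionallyCompleteLinearOrder α] (φ : ι → β → α) {a b : ι}
    (hab : ∀ e e', φ b e ≤ φ a e') (η : ι → β) (e : β) :
    ⨅ i, φ i (update η a e i) = ⨅ i, φ i (η i) := by
  have : Nonempty ι := ⟨a⟩
  have key : ∀ η η' : ι → β, (∀ i ≠ a, η i = η' i) → ⨅ i, φ i (η i) ≤ ⨅ i, φ i (η' i) := by
    intro η η' hη
    have hbdd := (Set.finite_range fun i => φ i (η i)).bddBelow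
    refine le_ciInf fun i => ?_
    obtain rfl | hi := eq_or_ne i a
    · exact (ciInf_le hbdd b).trans (hab _ _)
    · exact (ciInf_le hbdd i).trans_eq (by rw [hη i hi])
  exact le_antisymm (key _ _ fun i hi => update_of_ne hi _ _)
    (key _ _ fun i hi => (update_of_ne hi _ _).symm)

def unitClamp (t : ℝ) : ℝ := max 0 (min 1 t)

theorem monotone_unitClamp : Monotone unitClamp :=
  fun _ _ h => max_le_max le_rfl (min_le_min le_rfl h)

theorem continuous_unitClamp : Continuous unitClamp := by
  unfold unitClamp; fun_prop

theorem unitClamp_of_nonpos {t : ℝ} (ht : t ≤ 0) : unitClamp t = 0 := by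
  simp [unitClamp, ht]

theorem unitClamp_of_one_le {t : ℝ} (ht : 1 ≤ t) : unitClamp t = 1 := by
  simp [unitClamp, ht]

theorem max_zero_sub_max_zero_sub_one (t : ℝ) : max 0 t - max 0 (t - 1) = unitClamp t := by
  simp only [unitClamp, max_def, min_def]
  split_ifs <;> linarith

theorem boxSplineD_eq_sum_sub (d : ℕ) (x : Fin d → ℝ) :
    boxSplineD d x = ∑ η : Fin d → Fin 2, (-1 : ℝ) ^ (∑ i, (η i : ℕ)) *
      (max 0 (⨅ i, x i - (η i : ℕ)) - max 0 (⨅ i, x i - (η i : ℕ) - 1)) := by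
  rw [boxSplineD, ← (Fin.snocEquiv fun _ => Fin 2).sum_comp, Fintype.sum_prod_type,
    Fin.sum_univ_two, ← sum_add_distrib]
  refine sum_congr rfl fun η _ => ?_
  simp only [Fin.isValue, Fin.snocEquiv_apply, Fin.sum_univ_castSucc, Fin.snoc_castSucc,
    Fin.snoc_last, Fin.coe_ofNat_eq_mod, Nat.zero_mod, add_zero, CharP.cast_eq_zero, sub_zero,
    Nat.mod_succ, pow_succ, mul_neg, mul_one, Nat.cast_one, neg_mul]
  ring

theorem boxSplineD_eq_sum_unitClamp (d : ℕ) [Nonempty (Fin d)] (x : Fin d → ℝ) :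
    boxSplineD d x = ∑ η : Fin d → Fin 2, (-1 : ℝ) ^ (∑ i, (η i : ℕ)) *
      ⨅ i, unitClamp (x i - (η i : ℕ)) := by
  rw [boxSplineD_eq_sum_sub]
  refine sum_congr rfl fun η _ => ?_
  have hsub : ⨅ i, (x i - (η i : ℕ) - 1) = (⨅ i, x i - (η i : ℕ)) - 1 :=
    (Monotone.map_ciInf_of_continuousAt (f := (· - 1)) (by fun_prop)
      (fun _ _ h => sub_le_sub_right h 1) (Set.finite_range _).bddBelow).symm
  rw [hsub, max_zero_sub_max_zero_sub_one,
    monotone_unitClamp.map_ciInf_of_continuousAt continuous_unitClamp.continuousAt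
      (Set.finite_range _).bddBelow]

def cartesianZonotope (d : ℕ) : Set (Fin d → ℝ) :=
  {z | ∃ t : Fin (d + 1) → ℝ, (∀ i, t i ∈ Set.Icc (0 : ℝ) 1) ∧
    z = (∑ i : Fin d, t (Fin.castSucc i) • (Pi.single i (1 : ℝ) : Fin d → ℝ)) +
      t (Fin.last d) • (fun _ => (1 : ℝ))}

theorem mem_cartesianZonotope_of_forall {d : ℕ} {x : Fin d → ℝ} (h0 : ∀ i, 0 ≤ x i)
    (h2 : ∀ i, x i ≤ 2) (h1 : ∀ i j, x i ≤ x j + 1) : x ∈ cartesianZonotope d := by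
  set s := max 0 ((⨆ i, x i) - 1)
  have hle_sup : ∀ i, x i ≤ ⨆ i, x i := le_ciSup (Set.finite_range x).bddAbove
  have hsup_le : ∀ j, (⨆ i, x i) ≤ x j + 1 :=
    fun j => Real.iSup_le (h1 · j) (by linarith [h0 j])
  have hs_le : ∀ j, s ≤ x j := fun j => max_le (h0 j) (by linarith [hsup_le j])
  have hle_s : ∀ j, x j - 1 ≤ s := fun j => le_max_of_le_right (by linarith [hle_sup j])
  refine ⟨Fin.snoc (fun i => x i - s) s, fun i => ?_, ?_⟩
  · refine Fin.lastCases ?_ (fun j => ?_) i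
    · rw [Fin.snoc_last]
      exact ⟨le_max_left _ _, max_le zero_le_one (by linarith [Real.iSup_le h2 zero_le_two])⟩
    · rw [Fin.snoc_castSucc]
      exact ⟨by linarith [hs_le j], by linarith [hle_s j]⟩
  · ext j
    simp [Pi.single_apply]

theorem exists_unitClamp_le_of_notMem_cartesianZonotope {d : ℕ} {x : Fin d → ℝ}
    (hx : x ∉ cartesianZonotope d) :
    ∃ a b : Fin d, ∀ e e' : Fin 2, unitClamp (x b - (e : ℕ)) ≤ unitClamp (x a - (e' : ℕ)) := by
  have he : ∀ e : Fin 2, (0 : ℝ) ≤ (e : ℕ) ∧ ((e : ℕ) : ℝ) ≤ 1 :=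
    fun e => ⟨Nat.cast_nonneg _, Nat.cast_le_one.mpr (by omega)⟩
  have : (∃ i, x i < 0) ∨ (∃ i, 2 < x i) ∨ ∃ i j, x j + 1 < x i := by
    by_contra! h
    exact hx (mem_cartesianZonotope_of_forall h.1 h.2.1 h.2.2)
  rcases this with ⟨i, hi⟩ | ⟨i, hi⟩ | ⟨i, j, hij⟩
  · refine ⟨i, i, fun e e' => ?_⟩
    rw [unitClamp_of_nonpos, unitClamp_of_nonpos] <;> linarith [he e, he e']
  · refine ⟨i, i, fun e e' => ?_⟩
    rw [unitClamp_of_one_le, unitClamp_of_one_le] <;> linarith [he e, he e']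
  · exact ⟨i, j, fun e e' => monotone_unitClamp (by linarith [he e, he e'])⟩

theorem boxSpline_support_subset_zonotope_general (d : ℕ) (x : Fin d → ℝ)
    (hx : x ∉ {z : Fin d → ℝ | ∃ t : Fin (d + 1) → ℝ,
      (∀ i, t i ∈ Set.Icc (0 : ℝ) 1) ∧
      z = (∑ i : Fin d, t (Fin.castSucc i) • (Pi.single i (1 : ℝ) : Fin d → ℝ)) +
            t (Fin.last d) • (fun _ => (1 : ℝ))}) :
    boxSplineD d x = 0 := by
  obtain ⟨a, b, hab⟩ := exists_unitClamp_le_of_notMem_cartesianZonotope hx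
  have : Nonempty (Fin d) := ⟨a⟩
  rw [boxSplineD_eq_sum_unitClamp]
  exact sum_neg_one_pow_mul_eq_zero_of_update _ a
    (ciInf_update_eq_of_le (fun i (e : Fin 2) => unitClamp (x i - (e : ℕ))) hab)

/-- the Cartesian linear box spline vanishes outside the zonotope spanned by
`e_1, …, e_d` and `(1,…,1)`, i.e. its support is contained in the Minkowski sum of the
segments `[0,e_1], …, [0,e_d], [0,(1,…,1)]`. -/
theorem boxSpline_support_subset_zonotope (d : ℕ) (hd : 1 ≤ d) (x : Fin d → ℝ)
    (hx : x ∉ {z : Fin d → ℝ | ∃ t : Fin (d + 1) → ℝ,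
      (∀ i, t i ∈ Set.Icc (0 : ℝ) 1) ∧
      z = (∑ i : Fin d, t (Fin.castSucc i) • (Pi.single i (1 : ℝ) : Fin d → ℝ)) +
            t (Fin.last d) • (fun _ => (1 : ℝ))}) :
    boxSplineD d x = 0 :=
  boxSpline_support_subset_zonotope_general d x hx
end
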